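/- Let G be a temporal directed graph whose underlying graph G↓ = (V, ∪_t E_t) is the union of k directed (s,d)-paths P_1,…,P_k that are pairwise internally vertex-disjoint, each having at least one internal vertex, and suppose each P_i is realizable as a temporal (s,d)-path within [tα,tω] (i.e., there exist strictly increasing times making its edge sequence a temporal path in G within [tα,tω]). Then a set C ⊆ V \ {s,d} is a temporal (s,d)-separator within [tα,tω] if and only if C contains at least one internal vertex of each P_i; consequently, the minimum size of a temporal (s,d)-separator of G within [tα,tω] equals k. -/
import Mathlib


/-- A temporal `(s,d)`-path within the time interval `[tα, tω]` in a temporal directed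
graph on vertex type `V` with time-indexed edge relation `E`: a sequence of pairwise
distinct vertices `v 0 = s, …, v k = d` together with strictly increasing departure
times `t 1 < ⋯ < t k` (here `t i` is the time of the edge from `v i` to `v (i+1)`),
each edge present at its departure time, all departure times `≥ tα`, and arrival
`t k + 1 ≤ tω`.  The empty path (`k = 0`) requires `s = d`. -/
structure TPath (V : Type*) (E : ℕ → V → V → Prop) (s d : V) (tα tω : ℕ) where
  k : ℕ
  v : Fin (k + 1) → V
  t : Fin k → ℕ
  hv0 : v 0 = s
  hvk : v (Fin.last k) = d
  inj : Function.Injective v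
  mono : StrictMono t
  hedge : ∀ i : Fin k, E (t i) (v i.castSucc) (v i.succ)
  hstart : ∀ i : Fin k, tα ≤ t i
  hend : ∀ i : Fin k, t i + 1 ≤ tω

namespace TPath

variable {V : Type*} {E : ℕ → V → V → Prop} {s d : V} {tα tω : ℕ}

/-- Ending (arrival) time of a temporal path: `t k + 1`; the empty path arrives at `tα`. -/
def endTime (π : TPath V E s d tα tω) : ℕ :=
  if h : 0 < π.k then π.t ⟨π.k - 1, by omega⟩ + 1 else tα

/-- `x` is the index of the first point of contact of the path `π` with the decoy set `C`:
`π.v x ∈ C`, and `x` is the least such index. -/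
def hitsAt (π : TPath V E s d tα tω) (C : Set V) (x : Fin (π.k + 1)) : Prop :=
  π.v x ∈ C ∧ ∀ j : Fin (π.k + 1), π.v j ∈ C → x ≤ j

/-- Index of the first vertex of `π` lying in `C` (`sInf ∅ = 0` if there is none). -/
noncomputable def firstContact (π : TPath V E s d tα tω) (C : Set V) : ℕ :=
  sInf {i : ℕ | ∃ h : i < π.k + 1, π.v ⟨i, h⟩ ∈ C}

/-- Response time `RT(π, C) = t k − t x` where `v x` is the first point of contact of `π`
with `C` (entered via the edge with time `t x`); junk value `0` if `π` does not meet `C`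
properly. -/
noncomputable def RT (π : TPath V E s d tα tω) (C : Set V) : ℕ :=
  if h : 0 < π.firstContact C ∧ π.firstContact C ≤ π.k ∧ 0 < π.k then
    π.t ⟨π.k - 1, by omega⟩ - π.t ⟨π.firstContact C - 1, by omega⟩
  else 0

end TPath

/-- Earliest arrival time from the source set `S` to `x` within `[tα, tω]`
(`⊤ = ∞` if unreachable; it is `tα` for `x ∈ S`, realized by the empty path). -/
noncomputable def ea {V : Type*} (E : ℕ → V → V → Prop) (S : Set V) (tα tω : ℕ)
    (x : V) : ℕ∞ :=
  sInf {n : ℕ∞ | ∃ s ∈ S, ∃ π : TPath V E s x tα tω, n = (π.endTime : ℕ∞)}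

/-- `C` is a temporal `(S,d)`-cut within `[tα, tω]`: every temporal `(s,d)`-path within
`[tα, tω]` with `s ∈ S` contains a vertex of `C`. -/
def IsTemporalCut {V : Type*} (E : ℕ → V → V → Prop) (S : Set V) (d : V) (tα tω : ℕ)
    (C : Set V) : Prop :=
  ∀ s ∈ S, ∀ π : TPath V E s d tα tω, ∃ i, π.v i ∈ C

/-- suppose the underlying graph of `G` is exactly the union of `k` directed
`(s,d)`-paths `w i` (of lengths `m i ≥ 2`, so each has an internal vertex) that are
pairwise internally vertex-disjoint, and each is realizable as a temporal `(s,d)`-path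
within `[tα, tω]`.  Then `C ⊆ V \ {s,d}` is a temporal `(s,d)`-separator within
`[tα, tω]` iff it contains an internal vertex of each `w i`; consequently the minimum
size of such a separator equals `k`. -/
theorem separator_iff_hits_each_path_and_min_card {V : Type*} [Fintype V]
    (E : ℕ → V → V → Prop) (s d : V) (tα tω : ℕ) (hsd : s ≠ d)
    (k : ℕ) (m : Fin k → ℕ) (w : (i : Fin k) → Fin (m i + 1) → V)
    (hm : ∀ i, 2 ≤ m i)
    (hw0 : ∀ i, w i 0 = s) (hwlast : ∀ i, w i (Fin.last (m i)) = d)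
    (hwinj : ∀ i, Function.Injective (w i))
    (hdisj : ∀ i j, i ≠ j → ∀ (a : Fin (m i + 1)) (b : Fin (m j + 1)),
        0 < a.val → a.val < m i → 0 < b.val → b.val < m j → w i a ≠ w j b)
    (hund : ∀ u x : V, (∃ t, E t u x) ↔
        ∃ i, ∃ j : Fin (m i), w i j.castSucc = u ∧ w i j.succ = x)
    (hreal : ∀ i, ∃ π : TPath V E s d tα tω, ∃ hk : π.k = m i,
        ∀ a : Fin (π.k + 1), π.v a = w i (Fin.cast (by omega) a)) :
    (∀ C : Set V, s ∉ C → d ∉ C →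
      ((∀ π : TPath V E s d tα tω, ∃ a, π.v a ∈ C) ↔
        ∀ i, ∃ a : Fin (m i + 1), 0 < a.val ∧ a.val < m i ∧ w i a ∈ C)) ∧
    IsLeast {n : ℕ | ∃ C : Set V, s ∉ C ∧ d ∉ C ∧
        (∀ π : TPath V E s d tα tω, ∃ a, π.v a ∈ C) ∧ C.ncard = n} k := by

  classical
  -- every nonempty temporal (s,d)-path follows some w i through all internal vertices
  have follow : ∀ π : TPath V E s d tα tω, ∃ i : Fin k,
      ∀ a : ℕ, 1 ≤ a → a < m i →
        ∃ h1 : a < π.k + 1, ∃ h2 : a < m i + 1, π.v ⟨a, h1⟩ = w i ⟨a, h2⟩ := by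
    intro π
    have hπk : 1 ≤ π.k := by
      by_contra h
      have hk0 : π.k = 0 := by omega
      have hlast : π.v (Fin.last π.k) = π.v 0 := by
        congr 1
        ext
        simp [hk0]
      rw [π.hvk, π.hv0] at hlast
      exact hsd hlast.symm
    -- the inductive step
    have step : ∀ (i : Fin k) (a : ℕ), 1 ≤ a → ∀ ham : a < m i, ∀ hak : a < π.k + 1,
        π.v ⟨a, hak⟩ = w i ⟨a, by omega⟩ →
        ∃ h1 : a + 1 < π.k + 1, ∃ h2 : a + 1 < m i + 1,
          π.v ⟨a + 1, h1⟩ = w i ⟨a + 1, h2⟩ := by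
      intro i a ha1 ham hak hva
      have hne_d : π.v ⟨a, hak⟩ ≠ d := by
        rw [hva]
        intro h
        have h2 : (⟨a, by omega⟩ : Fin (m i + 1)) = Fin.last (m i) :=
          hwinj i (by rw [h, hwlast])
        have h3 := congrArg Fin.val h2
        simp [Fin.last] at h3
        omega
      have hak' : a < π.k := by
        rcases Nat.lt_or_ge a π.k with h | h
        · exact h
        · exfalso
          apply hne_d
          have he : (⟨a, hak⟩ : Fin (π.k + 1)) = Fin.last π.k := by
            ext; simp [Fin.last]; omega
          rw [he, π.hvk]
      have hedge := π.hedge ⟨a, hak'⟩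
      have e1 : (⟨a, hak'⟩ : Fin π.k).castSucc = (⟨a, hak⟩ : Fin (π.k + 1)) := rfl
      have e2 : (⟨a, hak'⟩ : Fin π.k).succ = (⟨a + 1, by omega⟩ : Fin (π.k + 1)) := rfl
      rw [e1, e2] at hedge
      obtain ⟨i', j', hj1, hj2⟩ := (hund _ _).mp ⟨_, hedge⟩
      rw [hva] at hj1
      have hii : i' = i := by
        by_contra hne
        have hj0 : 0 < j'.val := by
          rcases Nat.eq_zero_or_pos j'.val with h0 | h0
          · exfalso
            have hc : j'.castSucc = (0 : Fin (m i' + 1)) := by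
              ext; simpa using h0
            rw [hc, hw0 i'] at hj1
            have h4 : w i 0 = w i ⟨a, by omega⟩ := by rw [hw0]; exact hj1
            have h5 := congrArg Fin.val (hwinj i h4)
            simp at h5
            omega
          · exact h0
        exact hdisj i i' (fun h => hne h.symm) ⟨a, by omega⟩ j'.castSucc
          ha1 ham (by simp; omega) j'.isLt hj1.symm
      subst hii
      have hjv : j'.val = a := by
        have h4 := hwinj i' hj1
        have := congrArg Fin.val h4
        simpa using this
      refine ⟨by omega, by omega, ?_⟩
      rw [← hj2]
      congr 1
      ext
      simp [hjv]
    -- base case: the first edge determines i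
    have hedge0 := π.hedge ⟨0, hπk⟩
    have e1 : (⟨0, hπk⟩ : Fin π.k).castSucc = (0 : Fin (π.k + 1)) := rfl
    have e2 : (⟨0, hπk⟩ : Fin π.k).succ = (⟨1, by omega⟩ : Fin (π.k + 1)) := rfl
    rw [e1, e2, π.hv0] at hedge0
    obtain ⟨i, j, hj1, hj2⟩ := (hund _ _).mp ⟨_, hedge0⟩
    have hjv : j.val = 0 := by
      rw [← hw0 i] at hj1
      have h4 := hwinj i hj1
      have := congrArg Fin.val h4
      simpa using this
    have hbase : π.v ⟨1, by omega⟩ = w i ⟨1, by have := hm i; omega⟩ := by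
      rw [← hj2]
      congr 1
      ext
      simp [hjv]
    refine ⟨i, ?_⟩
    intro a
    induction a with
    | zero => omega
    | succ a ih =>
      intro _ ham
      rcases Nat.eq_zero_or_pos a with h0 | h0
      · subst h0
        exact ⟨by omega, by omega, hbase⟩
      · obtain ⟨h1, h2, hv⟩ := ih h0 (by omega)
        exact step i a h0 (by omega) h1 hv
  -- Part 1
  have part1 : ∀ C : Set V, s ∉ C → d ∉ C →
      ((∀ π : TPath V E s d tα tω, ∃ a, π.v a ∈ C) ↔
        ∀ i, ∃ a : Fin (m i + 1), 0 < a.val ∧ a.val < m i ∧ w i a ∈ C) := by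
    intro C hsC hdC
    constructor
    · intro hsep i
      obtain ⟨π, hk, hv⟩ := hreal i
      obtain ⟨a, haC⟩ := hsep π
      have ha0 : 0 < a.val := by
        rcases Nat.eq_zero_or_pos a.val with h0 | h0
        · exfalso
          have : a = 0 := by ext; simpa using h0
          rw [this, π.hv0] at haC
          exact hsC haC
        · exact h0
      have ham : a.val < m i := by
        have hle : a.val ≤ m i := by have := a.isLt; omega
        rcases Nat.lt_or_ge a.val (m i) with h | h
        · exact h
        · exfalso
          have : a = Fin.last π.k := by ext; simp [Fin.last]; omega
          rw [this, π.hvk] at haC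
          exact hdC haC
      refine ⟨Fin.cast (by omega) a, by simpa using ha0, by simpa using ham, ?_⟩
      rw [← hv a]
      exact haC
    · intro hC π
      obtain ⟨i, hfol⟩ := follow π
      obtain ⟨a, ha0, ham, haC⟩ := hC i
      obtain ⟨h1, h2, hv⟩ := hfol a.val ha0 ham
      refine ⟨⟨a.val, h1⟩, ?_⟩
      rw [hv]
      have : (⟨a.val, h2⟩ : Fin (m i + 1)) = a := by ext; simp
      rwa [this]
  refine ⟨part1, ?_, ?_⟩
  · -- membership: take C₀ = { w i 1 : i }
    have hlt1 : ∀ i : Fin k, 1 < m i + 1 := fun i => by have := hm i; omega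
    set f : Fin k → V := fun i => w i ⟨1, hlt1 i⟩ with hf
    have hfinj : Function.Injective f := by
      intro i j hij
      by_contra hne
      exact hdisj i j hne ⟨1, hlt1 i⟩ ⟨1, hlt1 j⟩ one_pos (lt_of_lt_of_le one_lt_two (hm i))
        one_pos (lt_of_lt_of_le one_lt_two (hm j)) hij
    have hsC : s ∉ Set.range f := by
      rintro ⟨i, hi⟩
      rw [hf, ← hw0 i] at hi
      have := congrArg Fin.val (hwinj i hi)
      simp at this
    have hdC : d ∉ Set.range f := by
      rintro ⟨i, hi⟩
      rw [hf, ← hwlast i] at hi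
      have := congrArg Fin.val (hwinj i hi)
      simp [Fin.last] at this
      have := hm i
      omega
    refine ⟨Set.range f, hsC, hdC, ?_, ?_⟩
    · rw [part1 _ hsC hdC]
      intro i
      exact ⟨⟨1, hlt1 i⟩, one_pos, lt_of_lt_of_le one_lt_two (hm i), ⟨i, rfl⟩⟩
    · rw [← Set.image_univ, Set.ncard_image_of_injective _ hfinj, Set.ncard_univ]
      simp
  · -- lower bound
    rintro n ⟨C, hsC, hdC, hsep, rfl⟩
    have hC := (part1 C hsC hdC).mp hsep
    choose a ha0 ham haC using hC
    set f : Fin k → V := fun i => w i (a i) with hf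
    have hfinj : Function.Injective f := by
      intro i j hij
      by_contra hne
      exact hdisj i j hne (a i) (a j) (ha0 i) (ham i) (ha0 j) (ham j) hij
    have hsub : Set.range f ⊆ C := by
      rintro x ⟨i, rfl⟩
      exact haC i
    calc k = (Set.range f).ncard := by
            rw [← Set.image_univ, Set.ncard_image_of_injective _ hfinj, Set.ncard_univ]
            simp
      _ ≤ C.ncard := Set.ncard_le_ncard hsub (Set.toFinite C)
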